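/- Let R be a commutative artinian principal ideal ring and M a finitely generated R-module. Then M is isomorphic as an R-module to Hom_R(M, R). -/

import Mathlib

/-!
In an artinian principal ideal ring every annihilator is principal, and comparing lengths shows
`ann (ann I) = I` for every ideal `I`. Hence `R` and all its quotients are self-injective (Baer's
criterion), and `Hom (R ⧸ I, R) ≅ ann I ≅ R ⧸ ann (ann I) = R ⧸ I`.

Splitting `M` into its primary components over the finitely many maximal ideals `m`, the ideals
containing the annihilator of a component are powers of `m`, so they form a chain. A generator
with minimal annihilator `A` then spans a copy of `R ⧸ A` that splits off, as `R ⧸ A` is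
self-injective and `A` kills the component. So `M` is a finite product of cyclic modules `R ⧸ I`,
each isomorphic to its dual.
-/

open Submodule

universe u v

def Module.IsSelfDual (R : Type u) (M : Type v) [CommRing R] [AddCommGroup M] [Module R M] :
    Prop :=
  Nonempty (M ≃ₗ[R] Module.Dual R M)

namespace Module.IsSelfDual

variable {R : Type u} [CommRing R]

theorem of_linearEquiv {M N : Type*} [AddCommGroup M] [Module R M] [AddCommGroup N] [Module R N]
    (e : M ≃ₗ[R] N) (h : IsSelfDual R M) : IsSelfDual R N :=
  ⟨e.symm.trans (h.some.trans e.symm.dualMap)⟩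

theorem pi {ι : Type*} [Fintype ι] {M : ι → Type*} [∀ i, AddCommGroup (M i)] [∀ i, Module R (M i)]
    (h : ∀ i, IsSelfDual R (M i)) : IsSelfDual R (Π i, M i) := by
  classical
  exact ⟨(LinearEquiv.piCongrRight fun i => (h i).some).trans (LinearMap.lsum R M R)⟩

end Module.IsSelfDual

noncomputable def LinearMap.quotSpanSingletonEquivTorsionBy {R M : Type*} [CommRing R]
    [AddCommGroup M] [Module R M] (a : R) :
    ((R ⧸ R ∙ a) →ₗ[R] M) ≃ₗ[R] torsionBy R M a where
  toFun f := ⟨f ((R ∙ a).mkQ 1), by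
    rw [mem_torsionBy_iff, ← map_smul, ← map_smul, smul_eq_mul, mul_one, mkQ_apply,
      (Quotient.mk_eq_zero _).mpr (mem_span_singleton_self a), map_zero]⟩
  invFun m := liftQSpanSingleton a (LinearMap.toSpanSingleton R M m) m.2
  map_add' _ _ := rfl
  map_smul' _ _ := rfl
  left_inv f := linearMap_qext _ <| LinearMap.ext_ring (one_smul R _)
  right_inv m := Subtype.ext (one_smul R (m : M))

namespace IsArtinianRing

variable {R : Type u} [CommRing R] [IsArtinianRing R]

/-- `ℓ (a) + ℓ (b) = ℓ R = ℓ (ann b) + ℓ (b)` because `(a) ≅ R ⧸ (b)` and `(b) ≅ R ⧸ ann b`,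
so the inclusion `(a) ≤ ann b` is an equality. -/
theorem torsionOf_eq_span_of_torsionOf_eq_span {a b : R}
    (h : Ideal.torsionOf R R a = Ideal.span {b}) : Ideal.torsionOf R R b = Ideal.span {a} := by
  have hlen (c : R) : Module.length R (Ideal.span {c}) =
      Module.length R (R ⧸ Ideal.torsionOf R R c) :=
    (Ideal.quotTorsionOfEquivSpanSingleton R R c).length_eq.symm
  have hadd (I : Ideal R) : Module.length R R = Module.length R I + Module.length R (R ⧸ I) :=
    Module.length_eq_add_of_exact _ _ I.injective_subtype I.mkQ_surjective
      (LinearMap.exact_subtype_mkQ I)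
  have hle : Ideal.span {a} ≤ Ideal.torsionOf R R b := by
    rw [Ideal.span_le, Set.singleton_subset_iff, SetLike.mem_coe, Ideal.mem_torsionOf_iff,
      smul_eq_mul, mul_comm, ← smul_eq_mul, ← Ideal.mem_torsionOf_iff, h]
    exact Ideal.mem_span_singleton_self b
  have hfin : Module.length R (R ⧸ Ideal.torsionOf R R b) ≠ ⊤ := Module.length_ne_top
  have heq : Module.length R (Ideal.span {a}) = Module.length R (Ideal.torsionOf R R b) := by
    refine (ENat.addLECancellable_of_ne_top hfin).inj_left.mp ?_
    rw [← hadd, ← hlen b, ← h, hlen a, add_comm, ← hadd]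
  rw [Module.length_submodule, Module.length_submodule] at heq
  exact (hle.eq_of_not_lt fun hlt => (Submodule.height_strictMono hlt).ne heq).symm

variable [IsPrincipalIdealRing R]

theorem exists_torsionOf_eq_span_and_torsionOf_eq_span (a : R) :
    ∃ b, Ideal.torsionOf R R a = Ideal.span {b} ∧ Ideal.torsionOf R R b = Ideal.span {a} := by
  obtain ⟨b, hb⟩ := (IsPrincipalIdealRing.principal (Ideal.torsionOf R R a)).principal
  rw [Ideal.submodule_span_eq] at hb
  exact ⟨b, hb, torsionOf_eq_span_of_torsionOf_eq_span hb⟩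

theorem baer_self : Module.Baer R R := by
  intro I g
  obtain ⟨a, rfl⟩ := (IsPrincipalIdealRing.principal I).principal
  obtain ⟨b, hab, hba⟩ := exists_torsionOf_eq_span_and_torsionOf_eq_span a
  have ha : a ∈ R ∙ a := mem_span_singleton_self a
  -- `g a` is killed by `ann a = (b)`, hence lies in `ann b = (a)`
  have hc : g ⟨a, ha⟩ ∈ Ideal.torsionOf R R b := by
    have hb : b • a = 0 := by
      rw [← Ideal.mem_torsionOf_iff, hab]; exact Ideal.mem_span_singleton_self b
    rw [Ideal.mem_torsionOf_iff, smul_eq_mul, mul_comm, ← smul_eq_mul, ← map_smul,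
      show b • (⟨a, ha⟩ : R ∙ a) = 0 from Subtype.ext hb, map_zero]
  rw [hba, Ideal.mem_span_singleton'] at hc
  obtain ⟨d, hd⟩ := hc
  refine ⟨LinearMap.toSpanSingleton R R d, fun x hx => ?_⟩
  obtain ⟨r, rfl⟩ := mem_span_singleton.mp hx
  rw [LinearMap.toSpanSingleton_apply, ← SetLike.mk_smul_mk _ _ _ ha, map_smul, ← hd]
  simp only [smul_eq_mul]; ring

theorem baer_quotient (I : Ideal R) : Module.Baer (R ⧸ I) (R ⧸ I) :=
  have := IsPrincipalIdealRing.of_surjective _ (Ideal.Quotient.mk_surjective (I := I))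
  baer_self

theorem isSelfDual_quotient (I : Ideal R) : Module.IsSelfDual R (R ⧸ I) := by
  obtain ⟨a, rfl⟩ := (IsPrincipalIdealRing.principal I).principal
  obtain ⟨b, hab, hba⟩ := exists_torsionOf_eq_span_and_torsionOf_eq_span a
  have hspan : R ∙ b = torsionBy R R a := by
    ext c
    rw [mem_torsionBy_iff, smul_eq_mul, mul_comm, ← smul_eq_mul, ← Ideal.mem_torsionOf_iff, hab]
  exact ⟨(quotEquivOfEq _ _ hba.symm).trans <|
    (Ideal.quotTorsionOfEquivSpanSingleton R R b).trans <|
    (LinearEquiv.ofEq _ _ hspan).trans (LinearMap.quotSpanSingletonEquivTorsionBy a).symm⟩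

end IsArtinianRing

theorem Ideal.exists_eq_pow_of_pow_le {R : Type u} [CommRing R] [IsPrincipalIdealRing R]
    {m : Ideal R} [m.IsMaximal] {N : ℕ} {I : Ideal R} (hI : m ^ N ≤ I) : ∃ k, I = m ^ k := by
  classical
  obtain ⟨t, ht⟩ := (IsPrincipalIdealRing.principal m).principal
  obtain ⟨a, ha⟩ := (IsPrincipalIdealRing.principal I).principal
  rw [submodule_span_eq] at ht ha
  subst ha
  by_cases haN : a ∈ m ^ N
  · exact ⟨N, le_antisymm ((span_singleton_le_iff_mem _).mpr haN) hI⟩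
  have hex : ∃ k, a ∉ m ^ (k + 1) := ⟨N, fun h => haN (pow_le_pow_right (by omega) h)⟩
  obtain ⟨k, hk, hak⟩ : ∃ k, a ∉ m ^ (k + 1) ∧ a ∈ m ^ k := by
    refine ⟨Nat.find hex, Nat.find_spec hex, ?_⟩
    rcases Nat.eq_zero_or_pos (Nat.find hex) with h0 | hpos
    · simp [h0]
    · simpa [Nat.sub_add_cancel hpos] using Nat.find_min hex (m := Nat.find hex - 1) (by omega)
  have hpow (j : ℕ) : m ^ j = span {t ^ j} := by rw [ht, span_singleton_pow]
  rw [hpow, mem_span_singleton'] at hak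
  obtain ⟨u, hau⟩ := hak
  have hu : u ∉ m := fun hu => hk <| by
    obtain ⟨w, rfl⟩ := mem_span_singleton'.mp (ht ▸ hu)
    rw [hpow, mem_span_singleton', ← hau]
    exact ⟨w, by ring⟩
  -- `u` is invertible modulo `m ^ N ≤ (a)`, so `t ^ k ∈ (a)`
  obtain ⟨v, hv⟩ := (Ideal.Quotient.isUnit_mk_pow_of_notMem m (n := N) hu).exists_right_inv
  obtain ⟨v, rfl⟩ := Ideal.Quotient.mk_surjective v
  rw [← map_mul, ← map_one (Ideal.Quotient.mk _), Ideal.Quotient.eq] at hv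
  refine ⟨k, le_antisymm ((span_singleton_le_iff_mem _).mpr (hau ▸ ?_)) ?_⟩
  · exact (hpow k).symm ▸ mul_mem_left _ u (mem_span_singleton_self _)
  · rw [hpow, span_singleton_le_iff_mem]
    have h1 := hI (Ideal.mul_mem_left _ (t ^ k) hv)
    have h2 : a * v ∈ span {a} := mul_mem_right _ _ (mem_span_singleton_self a)
    convert sub_mem h2 h1 using 1
    rw [← hau]; ring

theorem Ideal.isChain_Ici_pow {R : Type u} [CommRing R] [IsPrincipalIdealRing R]
    (m : Ideal R) [m.IsMaximal] (N : ℕ) : IsChain (· ≤ ·) (Set.Ici (m ^ N)) := by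
  intro I hI J hJ _
  obtain ⟨k, rfl⟩ := exists_eq_pow_of_pow_le hI
  obtain ⟨l, rfl⟩ := exists_eq_pow_of_pow_le hJ
  exact (le_total k l).symm.imp (pow_le_pow_right ·) (pow_le_pow_right ·)

section CyclicDecomposition

variable {R : Type u} [CommRing R] {M : Type v} [AddCommGroup M] [Module R M]

theorem Module.Baer.exists_retraction_of_isTorsionBySet {A : Ideal R}
    (hA : Module.Baer (R ⧸ A) (R ⧸ A)) (hM : Module.IsTorsionBySet R M A)
    (f : (R ⧸ A) →ₗ[R] M) (hf : Function.Injective f) :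
    ∃ g : M →ₗ[R] R ⧸ A, g ∘ₗ f = LinearMap.id := by
  let _ := hM.module
  have := hM.isScalarTower (S := R)
  obtain ⟨g, hg⟩ := hA.extension_property
    (f.extendScalarsOfSurjective Ideal.Quotient.mk_surjective) hf LinearMap.id
  exact ⟨g.restrictScalars R, congr(LinearMap.restrictScalars R $hg)⟩

theorem nonempty_equiv_quotient_torsionOf_prod {x : M}
    (hM : Module.IsTorsionBySet R M (Ideal.torsionOf R M x))
    (hx : Module.Baer (R ⧸ Ideal.torsionOf R M x) (R ⧸ Ideal.torsionOf R M x)) :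
    Nonempty (M ≃ₗ[R] (R ⧸ Ideal.torsionOf R M x) × (M ⧸ R ∙ x)) := by
  let f := (R ∙ x).subtype ∘ₗ (Ideal.quotTorsionOfEquivSpanSingleton R M x).toLinearMap
  have hf : Function.Injective f := (R ∙ x).injective_subtype.comp (LinearEquiv.injective _)
  have hexact : Function.Exact f (R ∙ x).mkQ := by
    rw [LinearMap.exact_iff, ker_mkQ, LinearMap.range_comp, LinearEquiv.range,
      Submodule.map_top, range_subtype]
  obtain ⟨g, hg⟩ := hx.exists_retraction_of_isTorsionBySet hM f hf
  exact ⟨(hexact.splitInjectiveEquiv (mkQ_surjective _) ⟨g, hg⟩).1⟩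

theorem span_range_mkQ_comp_succAbove {n : ℕ} {s : Fin (n + 1) → M}
    (hs : span R (Set.range s) = ⊤) {N : Submodule R M} {i : Fin (n + 1)} (hi : s i ∈ N) :
    span R (Set.range (N.mkQ ∘ s ∘ i.succAbove)) = ⊤ := by
  rw [eq_top_iff, ← range_mkQ N, LinearMap.range_eq_map, ← hs, map_span, span_le]
  rintro _ ⟨_, ⟨j, rfl⟩, rfl⟩
  rcases eq_or_ne j i with rfl | hj
  · simp [(Quotient.mk_eq_zero N).mpr hi]
  · obtain ⟨k, rfl⟩ := Fin.exists_succAbove_eq hj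
    exact subset_span ⟨k, rfl⟩

theorem exists_torsionOf_le_of_isChain {J : Ideal R} (hJ : IsChain (· ≤ ·) (Set.Ici J))
    (hM : Module.IsTorsionBySet R M J) {n : ℕ} (s : Fin (n + 1) → M) :
    ∃ i, ∀ j, Ideal.torsionOf R M (s i) ≤ Ideal.torsionOf R M (s j) := by
  have hJle (m : M) : J ≤ Ideal.torsionOf R M m := fun a ha => @hM m ⟨a, ha⟩
  obtain ⟨_, ⟨i, rfl⟩, hmin⟩ :=
    (Set.finite_range fun i => Ideal.torsionOf R M (s i)).exists_minimal (Set.range_nonempty _)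
  exact ⟨i, fun j => (hJ.total (hJle (s i)) (hJle (s j))).elim id (hmin ⟨j, rfl⟩)⟩

theorem exists_linearEquiv_pi_quotient_of_isChain {J : Ideal R}
    (hJ : IsChain (· ≤ ·) (Set.Ici J)) (hBaer : ∀ I, J ≤ I → Module.Baer (R ⧸ I) (R ⧸ I))
    [Module.Finite R M] (hM : Module.IsTorsionBySet R M J) :
    ∃ (ι : Type) (_ : Fintype ι) (I : ι → Ideal R), Nonempty (M ≃ₗ[R] Π i, R ⧸ I i) := by
  obtain ⟨n, s, hs⟩ := Module.Finite.exists_fin (R := R) (M := M)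
  clear ‹Module.Finite R M›
  induction n generalizing M with
  | zero =>
    rw [Set.range_eq_empty, span_empty] at hs
    have := (Submodule.subsingleton_iff R).mp (subsingleton_iff_bot_eq_top.mp hs)
    exact ⟨Empty, inferInstance, Empty.elim, ⟨.ofSubsingleton _ _⟩⟩
  | succ n ih =>
    obtain ⟨i, hi⟩ := exists_torsionOf_le_of_isChain hJ hM s
    set x := s i
    have hMx : Module.IsTorsionBySet R M (Ideal.torsionOf R M x) := by
      rw [Module.isTorsionBySet_iff_torsionBySet_eq_top, eq_top_iff, ← hs, span_le]
      rintro _ ⟨j, rfl⟩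
      exact (mem_torsionBySet_iff _ _).mpr fun ⟨a, ha⟩ => hi j ha
    obtain ⟨e⟩ := nonempty_equiv_quotient_torsionOf_prod hMx
      (hBaer _ fun a ha => @hM x ⟨a, ha⟩)
    obtain ⟨ι, _, I, ⟨e'⟩⟩ := ih (hM.quotient (R ∙ x)) _
      (span_range_mkQ_comp_succAbove hs (mem_span_singleton_self x))
    let I' : Option ι → Ideal R := fun o => o.elim (Ideal.torsionOf R M x) I
    exact ⟨Option ι, inferInstance, I', ⟨e.trans ((LinearEquiv.prodCongr (.refl _ _) e').trans
      (LinearEquiv.piOptionEquivProd R (M := fun o => R ⧸ I' o)).symm)⟩⟩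

end CyclicDecomposition

namespace IsArtinianRing

variable {R : Type u} [CommRing R] [IsArtinianRing R] [IsPrincipalIdealRing R]

theorem isSelfDual_of_isTorsionBySet_pow (m : Ideal R) [m.IsMaximal] (N : ℕ)
    (M : Type v) [AddCommGroup M] [Module R M] [Module.Finite R M]
    (hM : Module.IsTorsionBySet R M (m ^ N : Ideal R)) : Module.IsSelfDual R M := by
  obtain ⟨ι, _, I, ⟨e⟩⟩ := exists_linearEquiv_pi_quotient_of_isChain
    (Ideal.isChain_Ici_pow m N) (fun I _ => baer_quotient I) hM
  exact (Module.IsSelfDual.pi fun i => isSelfDual_quotient (I i)).of_linearEquiv e.symm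

theorem isSelfDual (M : Type v) [AddCommGroup M] [Module R M] [Module.Finite R M] :
    Module.IsSelfDual R M := by
  classical
  have := Fintype.ofFinite (MaximalSpectrum R)
  obtain ⟨N, hN⟩ := IsNoetherianRing.isNilpotent_nilradical R
  let p : MaximalSpectrum R → Ideal R := fun m => m.asIdeal ^ N
  have hp : ((Finset.univ : Finset (MaximalSpectrum R)) : Set _).Pairwise
      fun i j => p i ⊔ p j = ⊤ :=
    fun i _ j _ hij => Ideal.isCoprime_iff_sup_eq.mp (i.isCoprime_of_ne hij).pow
  have hM : Module.IsTorsionBySet R M (⨅ i ∈ Finset.univ, p i : Ideal R) := by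
    rintro x ⟨a, ha⟩
    simp only [Finset.mem_univ, iInf_true, p, ← nilradical_pow_eq_iInf, hN] at ha
    simp [(Submodule.mem_bot R).mp ha]
  have hint := Submodule.torsionBySet_isInternal hp hM
  let e := (LinearEquiv.ofBijective (DirectSum.coeLinearMap _) hint).symm.trans
    (DirectSum.linearEquivFunOnFintype R _ _)
  refine (Module.IsSelfDual.pi fun i => ?_).of_linearEquiv e.symm
  exact isSelfDual_of_isTorsionBySet_pow _ N _ (torsionBySet_isTorsionBySet _)

end IsArtinianRing

theorem artinian_pir_module_iso_dual (R M : Type*) [CommRing R] [IsArtinianRing R]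
    [IsPrincipalIdealRing R] [AddCommGroup M] [Module R M] [Module.Finite R M] :
    Nonempty (M ≃ₗ[R] (M →ₗ[R] R)) :=
  IsArtinianRing.isSelfDual M
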